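/- Let c be a b-fold oriented k-coloring of the directed cycle C_r with k < 4b, and define the r×r binary matrix T by T[i,j] = 1 iff c(u_i) ∩ c(u_j) ≠ ∅. Then T[i,j] = T[i+1,j+1] for all i, j (indices modulo r), i.e., each row of T is a cyclic right-shift of the previous row. -/

import Mathlib

/-- An oriented graph: a directed graph with no loops and no directed 2-cycles. -/
structure OGraph (V : Type*) where
  adj : V → V → Prop
  irrefl : ∀ v, ¬ adj v v
  asymm : ∀ u v, adj u v → ¬ adj v u

/-- A homomorphism of oriented graphs. -/
def OGraph.Hom {V W : Type*} (G : OGraph V) (H : OGraph W) (f : V → W) : Prop :=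
  ∀ u v, G.adj u v → H.adj (f u) (f v)

/-- `f` is a `b`-fold oriented `k`-coloring of `G`. -/
def IsFoldColoring {V : Type*} (G : OGraph V) (b k : ℕ) (f : V → Finset (Fin k)) : Prop :=
  (∀ v, (f v).card = b) ∧
  (∀ u v, G.adj u v → Disjoint (f u) (f v)) ∧
  (∀ x y z w, G.adj x y → G.adj z w → ¬ Disjoint (f x) (f w) → Disjoint (f y) (f z))

/-- The `b`-fold oriented chromatic number. -/
noncomputable def foldChrom {V : Type*} (G : OGraph V) (b : ℕ) : ℕ :=
  sInf {k | ∃ f : V → Finset (Fin k), IsFoldColoring G b k f}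

/-- The fractional oriented chromatic number: the infimum of `k/b` over all
`b`-fold oriented `k`-colorings. -/
noncomputable def fracChrom {V : Type*} (G : OGraph V) : ℝ :=
  sInf {x : ℝ | ∃ (b k : ℕ) (f : V → Finset (Fin k)),
    0 < b ∧ IsFoldColoring G b k f ∧ x = (k : ℝ) / b}

/-- The directed cycle of length `r`. -/
def dirCycle (r : ℕ) (hr : 3 ≤ r) : OGraph (ZMod r) where
  adj u v := v = u + 1
  irrefl := by
    intro v hv
    haveI : NeZero r := ⟨by omega⟩
    have h1 : ((1 : ℕ) : ZMod r) = 0 := by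
      have := left_eq_add.mp hv
      simpa using this
    rw [ZMod.natCast_eq_zero_iff] at h1
    have := Nat.le_of_dvd one_pos h1
    omega
  asymm := by
    intro u v h1 h2
    haveI : NeZero r := ⟨by omega⟩
    have : u = u + 1 + 1 := by rw [← h1]; exact h2
    have h2' : ((2 : ℕ) : ZMod r) = 0 := by
      have := left_eq_add.mp (by rw [add_assoc] at this; exact this)
      push_cast
      simpa [one_add_one_eq_two] using this
    rw [ZMod.natCast_eq_zero_iff] at h2'
    have := Nat.le_of_dvd two_pos h2'
    omega


/-! Write `T i j` for `c(u_i) ∩ c(u_j) ≠ ∅`. The oriented-coloring rule gives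
`T i j → ¬ T (i+1) (j-1)`, and since four pairwise disjoint `b`-sets do not fit into `k < 4b`
colors while `c(u_j), c(u_{j+1}), c(u_{j+2})` are pairwise disjoint, every row of `T` has a `1`
among any three consecutive entries. These two local facts alone force `T i j ↔ T (i+1) (j+1)`:
assuming the contrary, they produce `T (j+1) i` together with its negation. -/

section ShiftInvariance

variable {G : Type*} [AddCommGroup G] {T : G → G → Prop} {a : G}

theorem rel_add_of_rel_of_cover (hT : ∀ {x y}, T x y → T y x)
    (hrule : ∀ x w, T x w → ¬ T (x + a) (w - a))
    (hcover : ∀ i j, T i j ∨ T i (j + a) ∨ T i (j + a + a)) {i j : G} (h : T i j) :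
    T (i + a) (j + a) := by
  by_contra h'
  have hi : T (i + a) j := by
    rcases hcover (i + a) (j - a) with h₀ | h₁ | h₂
    · exact absurd h₀ (hrule i j h)
    · rwa [sub_add_cancel] at h₁
    · rw [sub_add_cancel] at h₂; exact absurd h₂ h'
  have hj : T (j + a) i := by
    rcases hcover (j + a) (i - a) with h₀ | h₁ | h₂
    · exact absurd h₀ (hrule j i (hT h))
    · rwa [sub_add_cancel] at h₁
    · rw [sub_add_cancel] at h₂; exact absurd (hT h₂) h'
  exact absurd hj (by simpa using hrule j (i + a) (hT hi))

theorem rel_of_rel_add_of_cover (hT : ∀ {x y}, T x y → T y x)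
    (hrule : ∀ x w, T x w → ¬ T (x + a) (w - a))
    (hcover : ∀ i j, T i j ∨ T i (j + a) ∨ T i (j + a + a)) {i j : G}
    (h : T (i + a) (j + a)) :
    T i j := by
  by_contra h'
  have hi : ¬ T (i + a + a) j := by simpa using hrule (i + a) (j + a) h
  have hj : ¬ T (j + a + a) i := by simpa using hrule (j + a) (i + a) (hT h)
  have hij : T i (j + a) := by
    rcases hcover i j with h₀ | h₁ | h₂
    · exact absurd h₀ h'
    · exact h₁
    · exact absurd (hT h₂) hj
  have hji : T j (i + a) := by
    rcases hcover j i with h₀ | h₁ | h₂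
    · exact absurd (hT h₀) h'
    · exact h₁
    · exact absurd (hT h₂) hi
  exact hrule j (i + a) hji (by simpa using hT hij)

theorem rel_add_iff_of_cover (hT : ∀ {x y}, T x y → T y x)
    (hrule : ∀ x w, T x w → ¬ T (x + a) (w - a))
    (hcover : ∀ i j, T i j ∨ T i (j + a) ∨ T i (j + a + a)) (i j : G) :
    T (i + a) (j + a) ↔ T i j :=
  ⟨rel_of_rel_add_of_cover hT hrule hcover, rel_add_of_rel_of_cover hT hrule hcover⟩

end ShiftInvariance

theorem Finset.card_add_card_add_card_add_card_le {α : Type*} [Fintype α] [DecidableEq α]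
    {s t u v : Finset α} (hst : Disjoint s t) (hsu : Disjoint s u) (hsv : Disjoint s v)
    (htu : Disjoint t u) (htv : Disjoint t v) (huv : Disjoint u v) :
    s.card + t.card + u.card + v.card ≤ Fintype.card α := by
  calc s.card + t.card + u.card + v.card = (s ∪ t ∪ u ∪ v).card := by
        rw [card_union_of_disjoint
            (disjoint_union_left.2 ⟨disjoint_union_left.2 ⟨hsv, htv⟩, huv⟩),
          card_union_of_disjoint (disjoint_union_left.2 ⟨hsu, htu⟩), card_union_of_disjoint hst]
    _ ≤ Fintype.card α := card_le_univ _

namespace IsFoldColoring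

variable {r b k : ℕ} {hr : 3 ≤ r} {c : ZMod r → Finset (Fin k)}

theorem disjoint_add_one (hc : IsFoldColoring (dirCycle r hr) b k c) (v : ZMod r) :
    Disjoint (c v) (c (v + 1)) :=
  hc.2.1 v (v + 1) rfl

theorem disjoint_add_one_sub_one (hc : IsFoldColoring (dirCycle r hr) b k c) {x w : ZMod r}
    (h : ¬ Disjoint (c x) (c w)) : Disjoint (c (x + 1)) (c (w - 1)) :=
  hc.2.2 x (x + 1) (w - 1) w rfl (sub_add_cancel w 1).symm h

theorem disjoint_add_two (hc : IsFoldColoring (dirCycle r hr) b k c) (hb : 0 < b) (v : ZMod r) :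
    Disjoint (c v) (c (v + 2)) := by
  by_contra h
  have hself := hc.disjoint_add_one_sub_one h
  rw [show v + 2 - 1 = v + 1 by ring, Finset.disjoint_self_iff_empty] at hself
  have hcard := hc.1 (v + 1)
  rw [hself, Finset.card_empty] at hcard
  omega

theorem not_disjoint_or_of_lt_four_mul (hc : IsFoldColoring (dirCycle r hr) b k c) (hk : k < 4 * b)
    (i j : ZMod r) :
    ¬ Disjoint (c i) (c j) ∨ ¬ Disjoint (c i) (c (j + 1)) ∨
      ¬ Disjoint (c i) (c (j + 1 + 1)) := by
  by_contra! h
  obtain ⟨h₀, h₁, h₂⟩ := h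
  have hb : 0 < b := by omega
  have h02 : Disjoint (c j) (c (j + 1 + 1)) := by
    rw [add_assoc, one_add_one_eq_two]; exact hc.disjoint_add_two hb j
  have hle := Finset.card_add_card_add_card_add_card_le (hc.disjoint_add_one j) h02 h₀.symm
    (hc.disjoint_add_one (j + 1)) h₁.symm h₂.symm
  simp only [hc.1, Fintype.card_fin] at hle
  omega

end IsFoldColoring

theorem stmt14 (r b k : ℕ) (hr : 5 < r) (hk : k < 4 * b)
    (c : ZMod r → Finset (Fin k))
    (hc : IsFoldColoring (dirCycle r (by omega)) b k c) (i j : ZMod r) :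
    (¬ Disjoint (c i) (c j) ↔ ¬ Disjoint (c (i + 1)) (c (j + 1))) :=
  (rel_add_iff_of_cover (T := fun x y => ¬ Disjoint (c x) (c y))
    (fun h h' => h h'.symm) (fun _ _ h => not_not.2 (hc.disjoint_add_one_sub_one h))
    (hc.not_disjoint_or_of_lt_four_mul hk) i j).symm
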